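/- arXiv:1603.05444 — 6 statements merged into one kernel-verified Lean document; each statement's English description precedes it below -/
import Mathlib

section
/- Let $A$ be a unital C*-algebra, and $x, y, z \in A$ with $\|x\| \le 1$, $\|y\| \le 1$, $\|z\| \le 1$. Suppose there exists $b \in A$ with $bb^* = \|xx^* + zz^*\|\cdot 1 - xx^* - zz^*$ such that $\left|\,\left\|\begin{pmatrix} 0 & y & 1 & 0 \\ 2\cdot 1 & x & z & b \end{pmatrix}\right\|^2 - (4 + \|xx^* + zz^*\|)\,\right| < \epsilon$ for some $\epsilon \in (0,1)$. Then $\|xy^* + z\| \le 4\sqrt{\epsilon}$. -/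
set_option maxHeartbeats 1000000

open Matrix in
/-- The corner embedding `a ↦ π (single i i a)` as a non-unital star algebra hom. -/
noncomputable def cornerHom {A C : Type*} [CStarAlgebra A] [CStarAlgebra C]
    (π : Matrix (Fin 4) (Fin 4) A →⋆ₐ[ℂ] C) (i : Fin 4) : A →⋆ₙₐ[ℂ] C where
  toFun a := π (single i i a)
  map_smul' r a := by
    show π (single i i (r • a)) = r • π (single i i a)
    rw [← Matrix.smul_single, _root_.map_smul]
  map_zero' := by
    show π (single i i (0:A)) = 0
    rw [Matrix.single_zero, map_zero]
  map_add' a b := by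
    show π (single i i (a + b)) = π (single i i a) + π (single i i b)
    rw [Matrix.single_add, map_add]
  map_mul' a b := by
    show π (single i i (a * b)) = π (single i i a) * π (single i i b)
    rw [← Matrix.single_mul_single_same (j := i), _root_.map_mul]
  map_star' a := by
    show π (single i i (star a)) = star (π (single i i a))
    rw [← map_star]
    congr 1
    ext i' j'
    simp [Matrix.star_apply, Matrix.single, apply_ite star, and_comm]

open Matrix in
lemma cornerHom_injective {A C : Type*} [CStarAlgebra A] [CStarAlgebra C]
    (π : Matrix (Fin 4) (Fin 4) A →⋆ₐ[ℂ] C) (hπ : Function.Injective π) (i : Fin 4) :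
    Function.Injective (cornerHom π i) := by
  intro a b hab
  have h2 := congrArg (fun M => M i i) (hπ hab)
  simpa [Matrix.single] using h2

open Matrix in
lemma cornerHom_norm {A C : Type*} [CStarAlgebra A] [CStarAlgebra C]
    (π : Matrix (Fin 4) (Fin 4) A →⋆ₐ[ℂ] C) (hπ : Function.Injective π) (i : Fin 4) (a : A) :
    ‖π (single i i a)‖ = ‖a‖ :=
  NonUnitalStarAlgHom.norm_map (cornerHom π i) (cornerHom_injective π hπ i) a

namespace NormXYZAux

open Matrix

variable {A : Type*} [CStarAlgebra A]

lemma matStar (x y z b : A) :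
    star (!![0, y, 1, 0; 2, x, z, b; 0,0,0,0; 0,0,0,0] : Matrix (Fin 4) (Fin 4) A)
    = !![0, star 2, 0, 0; star y, star x, 0, 0; 1, star z, 0, 0; 0, star b, 0, 0] := by
  ext i j
  fin_cases i <;> fin_cases j <;> simp [Matrix.star_apply, Matrix.vecHead, Matrix.vecTail]

lemma matW (x y z b : A) :
    (!![0, y, 1, 0; 2, x, z, b; 0,0,0,0; 0,0,0,0] : Matrix (Fin 4) (Fin 4) A) *
      !![0, star 2, 0, 0; star y, star x, 0, 0; 1, star z, 0, 0; 0, star b, 0, 0]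
    = !![y * star y + 1, y * star x + star z, 0, 0;
         x * star y + z, 2 * star 2 + (x * star x + (z * star z + b * star b)), 0, 0;
         0,0,0,0; 0,0,0,0] := by
  ext i j
  fin_cases i <;> fin_cases j <;>
    simp [Matrix.mul_apply, Fin.sum_univ_four, Matrix.vecHead, Matrix.vecTail, add_assoc]

variable (a c d w : A)

lemma mat1 : (single 0 0 (1:A) + single 1 1 1) * !![a, w, 0, 0; c, d, 0, 0; 0,0,0,0; 0,0,0,0]
      * (single 0 0 (1:A) + single 1 1 1) = !![a, w, 0, 0; c, d, 0, 0; 0,0,0,0; 0,0,0,0] := by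
  ext i j
  fin_cases i <;> fin_cases j <;>
    simp [Matrix.mul_apply, Fin.sum_univ_four, Matrix.single,
      Matrix.vecHead, Matrix.vecTail]

lemma mat2 : single 1 1 (1:A) * !![a, w, 0, 0; c, d, 0, 0; 0,0,0,0; 0,0,0,0]
      * single 0 0 (1:A) = single 1 0 c := by
  ext i j
  fin_cases i <;> fin_cases j <;>
    simp [Matrix.mul_apply, Fin.sum_univ_four, Matrix.single,
      Matrix.vecHead, Matrix.vecTail]

lemma mat3 : single 1 1 (1:A) * !![a, w, 0, 0; c, d, 0, 0; 0,0,0,0; 0,0,0,0]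
      * single 1 1 (1:A) = single 1 1 d := by
  ext i j
  fin_cases i <;> fin_cases j <;>
    simp [Matrix.mul_apply, Fin.sum_univ_four, Matrix.single,
      Matrix.vecHead, Matrix.vecTail]

lemma mat4 : single 0 0 (1:A) * !![a, w, 0, 0; c, d, 0, 0; 0,0,0,0; 0,0,0,0]
      * single 0 0 (1:A) = single 0 0 a := by
  ext i j
  fin_cases i <;> fin_cases j <;>
    simp [Matrix.mul_apply, Fin.sum_univ_four, Matrix.single,
      Matrix.vecHead, Matrix.vecTail]

lemma mat5 : (single 1 1 (1:A) : Matrix (Fin 4) (Fin 4) A) * (single 0 0 (1:A) + single 1 1 1) * single 0 0 (1:A) = 0 := by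
  ext i j
  fin_cases i <;> fin_cases j <;>
    simp [Matrix.mul_apply, Fin.sum_univ_four, Matrix.single]

lemma mat6 : (single 1 1 (1:A) : Matrix (Fin 4) (Fin 4) A) * (single 0 0 (1:A) + single 1 1 1) * single 1 1 1 = single 1 1 (1:A) := by
  ext i j
  fin_cases i <;> fin_cases j <;>
    simp [Matrix.mul_apply, Fin.sum_univ_four, Matrix.single]

lemma mat7 : (single 0 0 (1:A) : Matrix (Fin 4) (Fin 4) A) * (single 0 0 (1:A) + single 1 1 1) * single 0 0 (1:A) = single 0 0 (1:A) := by
  ext i j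
  fin_cases i <;> fin_cases j <;>
    simp [Matrix.mul_apply, Fin.sum_univ_four, Matrix.single]

lemma mat8 : star ((single 0 0 (1:A) : Matrix (Fin 4) (Fin 4) A) + single 1 1 1) = single 0 0 (1:A) + single 1 1 1 := by
  ext i j
  fin_cases i <;> fin_cases j <;> simp [Matrix.star_apply, Matrix.single]

lemma mat8a : star (single 0 0 (1:A) : Matrix (Fin 4) (Fin 4) A) = single 0 0 (1:A) := by
  ext i j
  fin_cases i <;> fin_cases j <;> simp [Matrix.star_apply, Matrix.single]

lemma mat8b : star (single 1 1 (1:A) : Matrix (Fin 4) (Fin 4) A) = single 1 1 (1:A) := by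
  ext i j
  fin_cases i <;> fin_cases j <;> simp [Matrix.star_apply, Matrix.single]

lemma mat8c (hsa : star a = a) : star (single 0 0 a : Matrix (Fin 4) (Fin 4) A) = single 0 0 a := by
  ext i j
  fin_cases i <;> fin_cases j <;> simp [Matrix.star_apply, Matrix.single, hsa]

lemma mat9 : star (single 1 0 c : Matrix (Fin 4) (Fin 4) A) = single 0 1 (star c) := by
  ext i j
  fin_cases i <;> fin_cases j <;> simp [Matrix.star_apply, Matrix.single]

lemma mat10 : (single 1 0 c : Matrix (Fin 4) (Fin 4) A) * single 0 1 (star c) = single 1 1 (c * star c) := by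
  ext i j
  fin_cases i <;> fin_cases j <;>
    simp [Matrix.mul_apply, Fin.sum_univ_four, Matrix.single]

lemma mat11 : ((single 0 0 (1:A) : Matrix (Fin 4) (Fin 4) A) + single 1 1 1) * (single 0 0 (1:A) + single 1 1 1) = single 0 0 (1:A) + single 1 1 1 := by
  ext i j
  fin_cases i <;> fin_cases j <;>
    simp [Matrix.mul_apply, Fin.sum_univ_four, Matrix.single]

end NormXYZAux

open Matrix NormXYZAux

/-- The key estimate in the main lemma: if `x, y, z` are contractions in a unital
C*-algebra `A`, `b` satisfies `bb* = ‖xx* + zz*‖·1 - xx* - zz*`, and the 2×4 matrix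
`!![0, y, 1, 0; 2·1, x, z, b]` (padded with zero rows to an element of `M₄(A)`, with
C*-norm computed via a faithful ⋆-representation `π`, which is automatically isometric)
has squared norm within `ε` of `4 + ‖xx* + zz*‖` for some `ε ∈ (0,1)`, then
`‖xy* + z‖ ≤ 4√ε`. -/
theorem norm_xy_star_add_z_le {A C : Type*} [CStarAlgebra A] [CStarAlgebra C]
    (x y z b : A) (ε : ℝ) (hx : ‖x‖ ≤ 1) (hy : ‖y‖ ≤ 1) (hz : ‖z‖ ≤ 1)
    (hb : b * star b = ‖x * star x + z * star z‖ • (1 : A) - x * star x - z * star z)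
    (hε : ε ∈ Set.Ioo (0 : ℝ) 1)
    (π : Matrix (Fin 4) (Fin 4) A →⋆ₐ[ℂ] C) (hπ : Function.Injective π)
    (h : |‖π (Matrix.of fun i j =>
            if i = 0 then ![(0 : A), y, 1, 0] j
            else if i = 1 then ![(2 : A), x, z, b] j
            else 0)‖ ^ 2 - (4 + ‖x * star x + z * star z‖)| < ε) :
    ‖x * star y + z‖ ≤ 4 * Real.sqrt ε := by
  obtain ⟨hε0, hε1⟩ := hε
  have hsε : 0 ≤ Real.sqrt ε := Real.sqrt_nonneg ε
  rcases subsingleton_or_nontrivial A with hA | hA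
  · have h0 : x * star y + z = 0 := Subsingleton.elim _ _
    rw [h0, norm_zero]
    positivity
  letI := CStarAlgebra.spectralOrder A
  haveI := CStarAlgebra.spectralOrderedRing A
  letI := CStarAlgebra.spectralOrder C
  haveI := CStarAlgebra.spectralOrderedRing C
  set t := ‖x * star x + z * star z‖ with ht
  set c := x * star y + z with hc
  have ht0 : 0 ≤ t := norm_nonneg _
  have ht2 : t ≤ 2 := by
    have h1 : ‖x * star x‖ ≤ ‖x‖ * ‖star x‖ := norm_mul_le _ _
    have h2 : ‖z * star z‖ ≤ ‖z‖ * ‖star z‖ := norm_mul_le _ _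
    have h3 := norm_add_le (x * star x) (z * star z)
    rw [norm_star] at h1 h2
    have hx0 := norm_nonneg x
    have hz0 := norm_nonneg z
    nlinarith
  -- the matrix in explicit form
  have hM : (Matrix.of fun i j =>
            if i = 0 then ![(0 : A), y, 1, 0] j
            else if i = 1 then ![(2 : A), x, z, b] j
            else 0)
      = !![0, y, 1, 0; 2, x, z, b; 0,0,0,0; (0:A),0,0,0] := by
    ext i j; fin_cases i <;> fin_cases j <;> rfl
  rw [hM] at h
  set M : Matrix (Fin 4) (Fin 4) A := !![0, y, 1, 0; 2, x, z, b; 0,0,0,0; (0:A),0,0,0]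
    with hMdef
  -- the (1,1) entry of M * Mᴴ
  have hd : (2:A) * star 2 + (x * star x + (z * star z + b * star b)) = (4 + t) • (1:A) := by
    rw [hb, star_ofNat]
    have h4 : ((4:ℝ) + t) • (1:A) = 4 + t • 1 := by
      rw [add_smul, ← Algebra.algebraMap_eq_smul_one (4:ℝ), map_ofNat]
    have h22 : (2:A) * 2 = 4 := by norm_num
    rw [h4, h22]
    abel
  have hcstar : y * star x + star z = star c := by
    rw [hc, star_add, StarMul.star_mul, star_star]
  set a : A := y * star y + 1 with ha
  have hW : M * star M = !![a, star c, 0, 0;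
      c, (4 + t) • (1:A), 0, 0; 0,0,0,0; 0,0,0,0] := by
    rw [hMdef, matStar x y z b, matW x y z b, hd, hcstar, ← hc, ← ha]
  -- move to C
  set s : ℝ := 4 + t + ε with hs
  set N : C := π M with hN
  set P : C := N * star N with hP
  have hPW : P = π (!![a, star c, 0, 0; c, (4 + t) • (1:A), 0, 0; 0,0,0,0; 0,0,0,0]) := by
    rw [hP, hN, ← map_star, ← _root_.map_mul, hW]
  have hP0 : 0 ≤ P := mul_star_self_nonneg N
  have hP_le : ‖P‖ ≤ s := by
    have h1 : ‖P‖ = ‖N‖ ^ 2 := by rw [hP, CStarRing.norm_self_mul_star, sq]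
    have h2 := abs_lt.mp h
    rw [h1, hs]
    linarith [h2.2]
  have hP_le1 : P ≤ s • 1 := by
    calc P ≤ algebraMap ℝ C ‖P‖ := IsSelfAdjoint.le_algebraMap_norm_self
    _ ≤ s • 1 := by
      rw [Algebra.algebraMap_eq_smul_one, ← sub_nonneg, ← sub_smul]
      exact smul_nonneg (by linarith) zero_le_one
  set e0 : C := π (single 0 0 (1:A)) with he0
  set e1 : C := π (single 1 1 (1:A)) with he1
  have hstar_e0 : star e0 = e0 := by rw [he0, ← map_star, mat8a]
  have hstar_e1 : star e1 = e1 := by rw [he1, ← map_star, mat8b]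
  set e : C := e0 + e1 with he
  have hestar : star e = e := by rw [he, star_add, hstar_e0, hstar_e1]
  have heπ : e = π (single 0 0 (1:A) + single 1 1 1) := by
    rw [he, he0, he1, map_add]
  set Q : C := s • e - P with hQ
  have hQ0 : 0 ≤ Q := by
    have key : Q = star e * ((s • 1 : C) - P) * e := by
      rw [hestar, mul_sub, sub_mul, mul_smul_comm, smul_mul_assoc, mul_one, hQ]
      congr 1
      · rw [heπ, ← _root_.map_mul, mat11]
      · rw [heπ, hPW, ← _root_.map_mul, ← _root_.map_mul, mat1]
    rw [key]
    exact star_left_conjugate_nonneg (sub_nonneg.2 hP_le1) e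
  -- entries of Q
  have hQ10 : e1 * Q * e0 = -π (single 1 0 c) := by
    rw [hQ, mul_sub, sub_mul, mul_smul_comm, smul_mul_assoc]
    have h1 : e1 * e * e0 = 0 := by
      rw [heπ, he1, he0, ← _root_.map_mul, ← _root_.map_mul, mat5, map_zero]
    have h2 : e1 * P * e0 = π (single 1 0 c) := by
      rw [hPW, he1, he0, ← _root_.map_mul, ← _root_.map_mul, mat2]
    rw [h1, h2, smul_zero, zero_sub]
  have hQ11 : e1 * Q * e1 = ε • e1 := by
    rw [hQ, mul_sub, sub_mul, mul_smul_comm, smul_mul_assoc]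
    have h1 : e1 * e * e1 = e1 := by
      rw [heπ, he1, ← _root_.map_mul, ← _root_.map_mul, mat6]
    have h2 : e1 * P * e1 = (4 + t) • e1 := by
      rw [hPW, he1, ← _root_.map_mul, ← _root_.map_mul, mat3, ← Matrix.smul_single]
      exact π.toAlgHom.toLinearMap.map_smul_of_tower (4 + t) _
    rw [h1, h2, ← sub_smul, hs]
    congr 1
    ring
  have hQ00 : e0 * Q * e0 = s • e0 - π (single 0 0 a) := by
    rw [hQ, mul_sub, sub_mul, mul_smul_comm, smul_mul_assoc]
    have h1 : e0 * e * e0 = e0 := by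
      rw [heπ, he0, ← _root_.map_mul, ← _root_.map_mul, mat7]
    have h2 : e0 * P * e0 = π (single 0 0 a) := by
      rw [hPW, he0, ← _root_.map_mul, ← _root_.map_mul, mat4]
    rw [h1, h2]
  -- square root of Q
  set R : C := CFC.sqrt Q with hR
  have hR0 : 0 ≤ R := CFC.sqrt_nonneg (a := Q)
  have hRsa : star R = R := (IsSelfAdjoint.of_nonneg hR0).star_eq
  have hRR : R * R = Q := CFC.sqrt_mul_sqrt_self Q hQ0
  -- norm computations
  have hnorm_e1 : ‖e1‖ = 1 := by
    rw [he1, cornerHom_norm π hπ, norm_one]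
  have hQc : ‖π (single 1 0 c)‖ = ‖c‖ := by
    set u : C := π (single 1 0 c) with hu
    have h1 : u * star u = π (single 1 1 (c * star c)) := by
      rw [hu, ← map_star, mat9, ← _root_.map_mul, mat10]
    have h2 : ‖u‖ ^ 2 = ‖c‖ ^ 2 := by
      rw [sq, ← CStarRing.norm_self_mul_star, h1, cornerHom_norm π hπ,
        CStarRing.norm_self_mul_star, sq]
    exact (sq_eq_sq₀ (norm_nonneg u) (norm_nonneg c)).mp h2
  -- the two Cauchy-Schwarz factors
  have hfact1 : ‖R * e1‖ ^ 2 = ε := by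
    have hst : star (R * e1) = e1 * R := by rw [StarMul.star_mul, hstar_e1, hRsa]
    have h1 : star (R * e1) * (R * e1) = e1 * Q * e1 := by
      rw [hst, ← hRR]; noncomm_ring
    rw [sq, ← CStarRing.norm_star_mul_self, h1, hQ11, norm_smul, hnorm_e1,
      Real.norm_eq_abs, abs_of_pos hε0, mul_one]
  have hfact2 : ‖R * e0‖ ^ 2 ≤ s := by
    have hst : star (R * e0) = e0 * R := by rw [StarMul.star_mul, hstar_e0, hRsa]
    have h1 : star (R * e0) * (R * e0) = e0 * Q * e0 := by
      rw [hst, ← hRR]; noncomm_ring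
    have hnn : 0 ≤ e0 * Q * e0 := by
      have hcj := star_left_conjugate_nonneg hQ0 e0
      rwa [hstar_e0] at hcj
    have hpos_a : 0 ≤ π (single 0 0 a) := by
      have ha0 : 0 ≤ a := by
        rw [ha]
        exact add_nonneg (mul_star_self_nonneg y) zero_le_one
      set r : A := CFC.sqrt a with hr
      have hr0 : 0 ≤ r := CFC.sqrt_nonneg (a := a)
      have hrr : r * r = a := CFC.sqrt_mul_sqrt_self a ha0
      have hstar_r : star r = r := (IsSelfAdjoint.of_nonneg hr0).star_eq
      have key : π (single 0 0 a)
          = star (π (single 0 0 r)) * π (single 0 0 r) := by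
        rw [← map_star, mat8c r hstar_r, ← _root_.map_mul, Matrix.single_mul_single_same, hrr]
      rw [key]
      exact star_mul_self_nonneg _
    have hle : e0 * Q * e0 ≤ s • e0 := by
      rw [hQ00]
      exact sub_le_self _ hpos_a
    have hnorm_le : ‖e0 * Q * e0‖ ≤ ‖s • e0‖ :=
      CStarAlgebra.norm_le_norm_of_nonneg_of_le hnn hle
    have hse0 : ‖s • e0‖ ≤ s := by
      have hspos : (0:ℝ) < s := by rw [hs]; linarith
      have hne0 : ‖e0‖ = 1 := by rw [he0, cornerHom_norm π hπ, norm_one]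
      rw [norm_smul, Real.norm_eq_abs, abs_of_pos hspos, hne0, mul_one]
    calc ‖R * e0‖ ^ 2 = ‖e0 * Q * e0‖ := by
          rw [sq, ← CStarRing.norm_star_mul_self, h1]
    _ ≤ s := hnorm_le.trans hse0
  -- assemble
  have hkey : ‖c‖ ≤ ‖R * e1‖ * ‖R * e0‖ := by
    have h1 : e1 * Q * e0 = (e1 * R) * (R * e0) := by rw [← hRR]; noncomm_ring
    have h2 : ‖e1 * Q * e0‖ = ‖c‖ := by rw [hQ10, norm_neg, hQc]
    have h3 : ‖e1 * R‖ = ‖R * e1‖ := by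
      rw [← norm_star (e1 * R), StarMul.star_mul, hstar_e1, hRsa]
    calc ‖c‖ = ‖(e1 * R) * (R * e0)‖ := by rw [← h1, h2]
    _ ≤ ‖e1 * R‖ * ‖R * e0‖ := norm_mul_le _ _
    _ = ‖R * e1‖ * ‖R * e0‖ := by rw [h3]
  have hRe1 : ‖R * e1‖ = Real.sqrt ε := by
    rw [← Real.sqrt_sq (norm_nonneg (R * e1)), hfact1]
  have hRe0 : ‖R * e0‖ ≤ 4 := by
    have hs16 : s ≤ 16 := by rw [hs]; linarith
    nlinarith [norm_nonneg (R * e0), hfact2]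
  calc ‖c‖ ≤ ‖R * e1‖ * ‖R * e0‖ := hkey
  _ ≤ Real.sqrt ε * 4 := by
      rw [hRe1]
      exact mul_le_mul_of_nonneg_left hRe0 hsε
  _ = 4 * Real.sqrt ε := by ring
end

section
/- Let $A$, $B$ be unital C*-algebras and $\phi : A \to B$ a unital completely positive map. Then for all $x, y \in A$: $\|\phi(y^* x) - \phi(y)^* \phi(x)\| \le \|\phi(y^* y) - \phi(y)^* \phi(y)\|^{1/2} \cdot \|\phi(x^* x) - \phi(x)^* \phi(x)\|^{1/2}$. -/
/-- An element of a C*-algebra (or of a matrix algebra over one) is positive iff it is of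
the form `star n * n`; we use this to express positivity of matrices over `A`. -/
def Matrix.IsPosSemidef {A : Type*} [CStarAlgebra A] {n : ℕ}
    (M : Matrix (Fin n) (Fin n) A) : Prop :=
  ∃ N : Matrix (Fin n) (Fin n) A, M = star N * N

/-- A linear map `φ : A → B` between unital C*-algebras is completely positive if each of
its matrix amplifications `Mₙ(A) → Mₙ(B)` maps positive matrices to positive matrices. -/
def IsCompletelyPositive {A B : Type*} [CStarAlgebra A] [CStarAlgebra B]
    (φ : A →ₗ[ℂ] B) : Prop :=
  ∀ (n : ℕ) (M : Matrix (Fin n) (Fin n) A),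
    M.IsPosSemidef → (M.map φ).IsPosSemidef

/-- A completely positive map is star-preserving. -/
lemma ucp_star_map {A B : Type*} [CStarAlgebra A] [CStarAlgebra B]
    (φ : A →ₗ[ℂ] B) (hcp : IsCompletelyPositive φ) (a : A) :
    φ (star a) = star (φ a) := by
  obtain ⟨N, hN⟩ := hcp 2 (Matrix.of ![![1, a], ![star a, star a * a]])
    ⟨Matrix.of ![![1, a], ![0, 0]], by
      ext i j
      fin_cases i <;> fin_cases j <;>
        simp [Matrix.mul_apply, Fin.sum_univ_two, Matrix.star_apply]⟩
  have hsa : star (star N * N) = star N * N := by rw [star_mul, star_star]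
  have h10 := congrArg (fun M => M 1 0) hN
  have h01 := congrArg (fun M => M 0 1) hN
  simp only [Matrix.map_apply] at h10 h01
  have e10 : ((star N * N) : Matrix (Fin 2) (Fin 2) B) 1 0
      = star (((star N * N) : Matrix (Fin 2) (Fin 2) B) 0 1) := by
    conv_lhs => rw [← hsa]
    simp [Matrix.star_apply]
  calc φ (star a) = (star N * N) 1 0 := by simpa using h10
    _ = star ((star N * N) 0 1) := e10
    _ = star (φ a) := by rw [← h01]; simp

/-- Key algebraic identity used for the C*-Cauchy-Schwarz argument. -/
lemma cs_sum_aux {B : Type*} [CStarAlgebra B] (u v : Fin 4 → B) (c : B)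
    (s : ℂ) (hs : s ≠ 0) (hsr : star s = s) :
    ∑ k, star ((s • u k - s⁻¹ • (v k * star c))) * (s • u k - s⁻¹ • (v k * star c)) =
      (s * s) • (∑ k, star (u k) * u k)
        - (∑ k, star (u k) * v k) * star c - c * star (∑ k, star (u k) * v k)
        + (s⁻¹ * s⁻¹) • (c * (∑ k, star (v k) * v k) * star c) := by
  have hk : ∀ k : Fin 4,
      star ((s • u k - s⁻¹ • (v k * star c))) * (s • u k - s⁻¹ • (v k * star c)) =
      (s * s) • (star (u k) * u k)
        - (star (u k) * v k) * star c - c * (star (v k) * u k)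
        + (s⁻¹ * s⁻¹) • (c * (star (v k) * v k) * star c) := by
    intro k
    have h1 : s * s⁻¹ = 1 := mul_inv_cancel₀ hs
    have h2 : s⁻¹ * s = 1 := inv_mul_cancel₀ hs
    simp only [star_sub, star_smul, star_mul, star_star, sub_mul, mul_sub,
      smul_mul_assoc, mul_smul_comm, smul_smul, hsr, star_inv₀,
      h1, h2, one_smul, mul_assoc]
    match_scalars <;> simp [h1, h2]
  rw [Finset.sum_congr rfl fun k _ => hk k]
  rw [Finset.sum_add_distrib, Finset.sum_sub_distrib, Finset.sum_sub_distrib]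
  congr 1
  · congr 1
    · congr 1
      · rw [Finset.smul_sum]
      · rw [Finset.sum_mul]
    · rw [star_sum]
      simp only [star_mul, star_star]
      rw [Finset.mul_sum]
  · rw [← Finset.smul_sum]
    congr 1
    rw [Finset.mul_sum, Finset.sum_mul]

/-- The quantitative inequality coming from positivity of the sum of squares. -/
lemma cs_key {B : Type*} [CStarAlgebra B] (u v : Fin 4 → B) {a b c : B}
    (ha : a = ∑ k, star (u k) * u k) (hb : b = ∑ k, star (v k) * v k)
    (hc : c = ∑ k, star (u k) * v k) (t : ℝ) (ht : 0 < t) :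
    2 * (‖c‖ * ‖c‖) ≤ (t * t) * ‖a‖ + (t⁻¹ * t⁻¹) * (‖c‖ * (‖b‖ * ‖c‖)) := by
  letI := CStarAlgebra.spectralOrder B
  haveI := CStarAlgebra.spectralOrderedRing B
  set s : ℂ := (t : ℂ) with hsdef
  have hs : s ≠ 0 := by
    simp only [hsdef, ne_eq, Complex.ofReal_eq_zero]
    exact ht.ne'
  have hsr : star s = s := by simp [hsdef, Complex.star_def, Complex.conj_ofReal]
  have key := cs_sum_aux u v c s hs hsr
  rw [← ha, ← hb, ← hc] at key
  have hpos : (0 : B) ≤ (s * s) • a - c * star c - c * star c + (s⁻¹ * s⁻¹) • (c * b * star c) := by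
    rw [← key]
    exact Finset.sum_nonneg fun k _ => star_mul_self_nonneg _
  have hle : c * star c + c * star c ≤ (s * s) • a + (s⁻¹ * s⁻¹) • (c * b * star c) := by
    rwa [sub_sub, sub_add_eq_add_sub, sub_nonneg] at hpos
  have hnn : (0 : B) ≤ c * star c + c * star c :=
    add_nonneg (mul_star_self_nonneg c) (mul_star_self_nonneg c)
  have hnorm := CStarAlgebra.norm_le_norm_of_nonneg_of_le hnn hle
  have h1 : ‖c * star c + c * star c‖ = 2 * (‖c‖ * ‖c‖) := by
    rw [← two_smul ℝ (c * star c), norm_smul, CStarRing.norm_self_mul_star]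
    simp
  have hcb : ‖c * b * star c‖ ≤ ‖c‖ * (‖b‖ * ‖c‖) := by
    calc ‖c * b * star c‖ ≤ ‖c * b‖ * ‖star c‖ := norm_mul_le _ _
      _ ≤ (‖c‖ * ‖b‖) * ‖star c‖ := by gcongr; exact norm_mul_le _ _
      _ = ‖c‖ * (‖b‖ * ‖c‖) := by rw [norm_star]; ring
  have h2 : ‖(s * s) • a + (s⁻¹ * s⁻¹) • (c * b * star c)‖
      ≤ (t * t) * ‖a‖ + (t⁻¹ * t⁻¹) * (‖c‖ * (‖b‖ * ‖c‖)) := by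
    refine (norm_add_le _ _).trans (add_le_add ?_ ?_)
    · rw [norm_smul, norm_mul]
      simp only [hsdef, Complex.norm_real, Real.norm_eq_abs, abs_of_pos ht, le_refl]
    · rw [norm_smul, norm_mul]
      have : ‖s⁻¹‖ = t⁻¹ := by
        rw [hsdef, norm_inv, Complex.norm_real, Real.norm_eq_abs, abs_of_pos ht]
      rw [this]
      have h0 : (0:ℝ) ≤ t⁻¹ * t⁻¹ := by positivity
      exact mul_le_mul_of_nonneg_left hcb h0
  linarith [hnorm, h2]

/-- Elementary real analysis: optimizing over `t` in the key inequality. -/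
lemma cs_numeric {X A B : ℝ} (hX : 0 ≤ X) (hA : 0 ≤ A) (hB : 0 ≤ B)
    (key : ∀ t : ℝ, 0 < t → 2 * (X * X) ≤ (t * t) * A + (t⁻¹ * t⁻¹) * (X * (B * X))) :
    X ≤ Real.sqrt A * Real.sqrt B := by
  rcases eq_or_lt_of_le hX with h | hXpos
  · rw [← h]; positivity
  rcases eq_or_lt_of_le hA with hA0 | hApos
  · exfalso
    set t := Real.sqrt (B + 1) with htdef
    have htpos : 0 < t := Real.sqrt_pos.mpr (by linarith)
    have htt : t * t = B + 1 := Real.mul_self_sqrt (by linarith)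
    have := key t htpos
    rw [← hA0, htt] at this
    have hinv : (t⁻¹ * t⁻¹) = (B + 1)⁻¹ := by
      rw [← mul_inv, htt]
    rw [hinv] at this
    have hlt : (B + 1)⁻¹ * (X * (B * X)) < 2 * (X * X) := by
      have h1 : (B+1)⁻¹ * B < 1 := by
        rw [inv_mul_lt_iff₀ (by linarith)]
        linarith
      have h2 : (B + 1)⁻¹ * (X * (B * X)) = ((B+1)⁻¹ * B) * (X * X) := by ring
      rw [h2]
      nlinarith
    linarith
  rcases eq_or_lt_of_le hB with hB0 | hBpos
  · exfalso
    set t := Real.sqrt (X * X / A) with htdef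
    have htpos : 0 < t := Real.sqrt_pos.mpr (by positivity)
    have htt : t * t = X * X / A := Real.mul_self_sqrt (by positivity)
    have := key t htpos
    rw [← hB0, htt] at this
    have : 2 * (X * X) ≤ X * X / A * A := by
      have hz : X * (0 * X) = 0 := by ring
      nlinarith
    rw [div_mul_cancel₀ _ hApos.ne'] at this
    nlinarith
  · set sa := Real.sqrt A with hsa
    set sb := Real.sqrt B with hsb
    have hsaA : sa * sa = A := Real.mul_self_sqrt hA
    have hsbB : sb * sb = B := Real.mul_self_sqrt hB
    have hsapos : 0 < sa := Real.sqrt_pos.mpr hApos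
    have hsbpos : 0 < sb := Real.sqrt_pos.mpr hBpos
    set t := Real.sqrt (X * sb / sa) with htdef
    have htpos : 0 < t := Real.sqrt_pos.mpr (by positivity)
    have htt : t * t = X * sb / sa := Real.mul_self_sqrt (by positivity)
    have hti : t⁻¹ * t⁻¹ = sa / (X * sb) := by
      rw [← mul_inv, htt, inv_div]
    have := key t htpos
    rw [htt, hti] at this
    have h1 : X * sb / sa * A = X * sb * sa := by
      field_simp
      rw [← hsaA]; ring
    have h2 : sa / (X * sb) * (X * (B * X)) = sa * sb * X := by
      field_simp
      rw [← hsbB]; ring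
    rw [h1, h2] at this
    nlinarith

/-- Expansion of a sum of products of differences. -/
lemma sum_expand {B : Type*} [Ring B] [StarRing B] (n0 ni nj : Fin 4 → B) (P Q : B) :
    ∑ k, star (ni k - n0 k * P) * (nj k - n0 k * Q)
      = (∑ k, star (ni k) * nj k) - (∑ k, star (ni k) * n0 k) * Q
        - star P * (∑ k, star (n0 k) * nj k) + star P * ((∑ k, star (n0 k) * n0 k) * Q) := by
  have hk : ∀ k : Fin 4, star (ni k - n0 k * P) * (nj k - n0 k * Q)
      = star (ni k) * nj k - (star (ni k) * n0 k) * Q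
        - star P * (star (n0 k) * nj k) + star P * ((star (n0 k) * n0 k) * Q) := by
    intro k
    simp only [star_sub, star_mul, sub_mul, mul_sub, mul_assoc]
    abel
  rw [Finset.sum_congr rfl fun k _ => hk k, Finset.sum_add_distrib, Finset.sum_sub_distrib,
    Finset.sum_sub_distrib, ← Finset.sum_mul, ← Finset.mul_sum, ← Finset.mul_sum,
    ← Finset.sum_mul]

set_option maxHeartbeats 1000000 in
/-- For a unital completely positive map `φ` between unital C*-algebras and all `x, y`:
`‖φ(y*x) - φ(y)*φ(x)‖ ≤ ‖φ(y*y) - φ(y)*φ(y)‖^{1/2} ‖φ(x*x) - φ(x)*φ(x)‖^{1/2}`. -/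
theorem ucp_mult_domain_estimate {A B : Type*} [CStarAlgebra A] [CStarAlgebra B]
    (φ : A →ₗ[ℂ] B) (hu : φ 1 = 1) (hcp : IsCompletelyPositive φ) (x y : A) :
    ‖φ (star y * x) - star (φ y) * φ x‖ ≤
      Real.sqrt ‖φ (star y * y) - star (φ y) * φ y‖ *
        Real.sqrt ‖φ (star x * x) - star (φ x) * φ x‖ := by
  have hφstar : ∀ a : A, φ (star a) = star (φ a) := ucp_star_map φ hcp
  set G : Matrix (Fin 4) (Fin 4) A := !![1, 0, y, x; 0, 1, 0, 0;
      star y, 0, star y * y, star y * x; star x, 0, star x * y, star x * x] with hGdef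
  have hGpos : G.IsPosSemidef := by
    refine ⟨!![1, 0, y, x; 0, 1, 0, 0; 0,0,0,0; 0,0,0,0], ?_⟩
    rw [hGdef]
    ext i j
    rw [Matrix.mul_apply, Fin.sum_univ_four]
    simp only [Matrix.star_apply]
    fin_cases i <;> fin_cases j <;>
      simp [Matrix.vecHead, Matrix.vecTail, Function.comp]
  obtain ⟨N, hN⟩ := hcp 4 G hGpos
  have hEntry : ∀ i j : Fin 4, (∑ k, star (N k i) * N k j) = φ (G i j) := by
    intro i j
    have h := congrArg (fun M => M i j) hN
    simp only [Matrix.map_apply, Matrix.mul_apply, Matrix.star_apply] at h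
    exact h.symm
  have e00 : G 0 0 = 1 := rfl
  have e02 : G 0 2 = y := rfl
  have e03 : G 0 3 = x := rfl
  have e20 : G 2 0 = star y := rfl
  have e30 : G 3 0 = star x := rfl
  have e22 : G 2 2 = star y * y := rfl
  have e23 : G 2 3 = star y * x := rfl
  have e33 : G 3 3 = star x * x := rfl
  set u : Fin 4 → B := fun k => N k 2 - N k 0 * φ y with hudef
  set v : Fin 4 → B := fun k => N k 3 - N k 0 * φ x with hvdef
  have hA : φ (star y * y) - star (φ y) * φ y = ∑ k, star (u k) * u k := by
    rw [hudef]
    rw [sum_expand (fun k => N k 0) (fun k => N k 2) (fun k => N k 2) (φ y) (φ y)]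
    rw [hEntry 2 2, hEntry 2 0, hEntry 0 2, hEntry 0 0,
      e22, e20, e02, e00, hu, hφstar y, one_mul]
    abel
  have hB : φ (star x * x) - star (φ x) * φ x = ∑ k, star (v k) * v k := by
    rw [hvdef]
    rw [sum_expand (fun k => N k 0) (fun k => N k 3) (fun k => N k 3) (φ x) (φ x)]
    rw [hEntry 3 3, hEntry 3 0, hEntry 0 3, hEntry 0 0,
      e33, e30, e03, e00, hu, hφstar x, one_mul]
    abel
  have hC : φ (star y * x) - star (φ y) * φ x = ∑ k, star (u k) * v k := by
    rw [hudef, hvdef]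
    rw [sum_expand (fun k => N k 0) (fun k => N k 2) (fun k => N k 3) (φ y) (φ x)]
    rw [hEntry 2 3, hEntry 2 0, hEntry 0 3, hEntry 0 0,
      e23, e20, e03, e00, hu, hφstar y, one_mul]
    abel
  exact cs_numeric (norm_nonneg _) (norm_nonneg _) (norm_nonneg _)
    (fun t ht => cs_key u v hA hB hC t ht)
end

section
/- Let $A$, $B$ be unital C*-algebras and $\phi : A \to B$ a unital completely positive map. Define the multiplicative domain $M_\phi = \{a \in A : \phi(a^*)\phi(a) = \phi(a^* a) \text{ and } \phi(a)\phi(a^*) = \phi(a a^*)\}$. Then $M_\phi$ is a C*-subalgebra of $A$ (i.e., a norm-closed, self-adjoint subalgebra containing $1$), and the restriction of $\phi$ to $M_\phi$ is a $*$-homomorphism. -/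
section Aux
variable {A B : Type*} [CStarAlgebra A] [CStarAlgebra B] (φ : A →ₗ[ℂ] B)

/-- Gram matrices over a C*-algebra are positive semidefinite. -/
lemma gram_isPosSemidef {n : ℕ} (y : Fin (n+1) → A) :
    (Matrix.of fun i j => star (y i) * y j :
      Matrix (Fin (n+1)) (Fin (n+1)) A).IsPosSemidef := by
  refine ⟨Matrix.of fun i j => if i = 0 then y j else 0, ?_⟩
  ext i j
  simp only [Matrix.mul_apply, Matrix.star_apply, Matrix.of_apply]
  rw [Finset.sum_eq_single (0 : Fin (n+1))]
  · simp
  · intro k _ hk; simp [hk]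
  · simp

lemma aux_sum (hcp : IsCompletelyPositive φ) {n : ℕ} (y : Fin (n+1) → A) :
    ∃ L : Matrix (Fin (n+1)) (Fin (n+1)) B, ∀ i j,
      φ (star (y i) * y j) = ∑ k, star (L k i) * L k j := by
  obtain ⟨L, hL⟩ := hcp (n+1) _ (gram_isPosSemidef y)
  refine ⟨L, fun i j => ?_⟩
  have := congrFun (congrFun hL i) j
  simpa [Matrix.mul_apply, Matrix.map_apply, Matrix.star_apply] using this

lemma aux_star (hcp : IsCompletelyPositive φ) (a : A) : φ (star a) = star (φ a) := by
  obtain ⟨L, hL⟩ := aux_sum φ hcp (n := 1) ![1, a]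
  have h10 : φ (star a) = ∑ k, star (L k 1) * L k 0 := by simpa using hL 1 0
  have h01 : φ a = ∑ k, star (L k 0) * L k 1 := by simpa using hL 0 1
  have : star (φ a) = ∑ k, star (L k 1) * L k 0 := by
    rw [h01, star_sum]
    simp [star_mul]
  rw [h10, this]


lemma aux_defect (hu : φ 1 = 1) (hcp : IsCompletelyPositive φ) {n : ℕ} (x : Fin n → A) :
    ∃ R : Fin (n+1) → Fin n → B, ∀ i j,
      φ (star (x i) * x j) = star (φ (x i)) * φ (x j) + ∑ k, star (R k i) * R k j := by
  obtain ⟨L, hL⟩ := aux_sum φ hcp (Fin.cons 1 x)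
  refine ⟨fun k j => L k j.succ - L k 0 * φ (x j), fun i j => ?_⟩
  have h00 : (∑ k, star (L k 0) * L k 0) = 1 := by
    have := (hL 0 0).symm; simpa [hu] using this
  have h0j : (∑ k, star (L k 0) * L k j.succ) = φ (x j) := by
    have := (hL 0 j.succ).symm; simpa using this
  have hi0 : (∑ k, star (L k i.succ) * L k 0) = star (φ (x i)) := by
    have := (hL i.succ 0).symm
    simpa [aux_star φ hcp] using this
  have hij : (∑ k, star (L k i.succ) * L k j.succ) = φ (star (x i) * x j) := by
    have := (hL i.succ j.succ).symm; simpa using this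
  have expand : ∀ k, star (L k i.succ - L k 0 * φ (x i)) * (L k j.succ - L k 0 * φ (x j)) =
      star (L k i.succ) * L k j.succ - (star (L k i.succ) * L k 0) * φ (x j)
        - star (φ (x i)) * (star (L k 0) * L k j.succ)
        + star (φ (x i)) * ((star (L k 0) * L k 0) * φ (x j)) := by
    intro k
    simp only [star_sub, star_mul]
    noncomm_ring
  calc φ (star (x i) * x j)
      = star (φ (x i)) * φ (x j) +
        ((∑ k, star (L k i.succ) * L k j.succ)
          - (∑ k, (star (L k i.succ) * L k 0) * φ (x j))
          - (∑ k, star (φ (x i)) * (star (L k 0) * L k j.succ))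
          + (∑ k, star (φ (x i)) * ((star (L k 0) * L k 0) * φ (x j)))) := by
        rw [← Finset.sum_mul, ← Finset.mul_sum, ← Finset.mul_sum, ← Finset.sum_mul,
          hij, hi0, h0j, h00]
        noncomm_ring
    _ = star (φ (x i)) * φ (x j) +
        ∑ k, star (L k i.succ - L k 0 * φ (x i)) * (L k j.succ - L k 0 * φ (x j)) := by
        congr 1
        simp only [expand, Finset.sum_add_distrib, Finset.sum_sub_distrib]


lemma aux_zero {m : ℕ} (u v : Fin m → B) (h : ∑ k, star (u k) * u k = 0) :
    ∑ k, star (v k) * u k = 0 := by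
  letI := CStarAlgebra.spectralOrder B
  haveI := CStarAlgebra.spectralOrderedRing B
  have hk : ∀ k, u k = 0 := by
    intro k
    have h0 := (Finset.sum_eq_zero_iff_of_nonneg
      (fun k _ => star_mul_self_nonneg (u k))).mp h k (Finset.mem_univ k)
    exact (CStarRing.star_mul_self_eq_zero_iff (u k)).mp h0
  simp [hk]

lemma aux_mul (hu : φ 1 = 1) (hcp : IsCompletelyPositive φ) {a : A}
    (ha : φ (star a) * φ a = φ (star a * a)) :
    (∀ b, φ (b * a) = φ b * φ a) ∧ (∀ b, φ (star a * b) = φ (star a) * φ b) := by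
  have key : ∀ b : A, φ (b * a) = φ b * φ a ∧ φ (star a * star b) = φ (star a) * φ (star b) := by
    intro b
    obtain ⟨R, hR⟩ := aux_defect φ hu hcp ![a, star b]
    have h00 := hR 0 0
    simp only [Matrix.cons_val_zero] at h00
    rw [← aux_star φ hcp, ← ha] at h00
    have hz : ∑ k, star (R k 0) * R k 0 = 0 := by
      have := h00.symm
      rwa [add_eq_left] at this
    have h10 := hR 1 0
    simp only [Matrix.cons_val_one, Matrix.head_cons, Matrix.cons_val_zero, star_star] at h10
    have hz10 : ∑ k, star (R k 1) * R k 0 = 0 := aux_zero (fun k => R k 0) (fun k => R k 1) hz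
    have h01 := hR 0 1
    simp only [Matrix.cons_val_one, Matrix.head_cons, Matrix.cons_val_zero] at h01
    have hz01 : ∑ k, star (R k 0) * R k 1 = 0 := by
      have : ∑ k, star (R k 0) * R k 1 = star (∑ k, star (R k 1) * R k 0) := by
        rw [star_sum]; simp [star_mul]
      rw [this, hz10, star_zero]
    constructor
    · rw [h10, hz10, add_zero, ← aux_star φ hcp (star b), star_star]
    · rw [h01, hz01, add_zero, ← aux_star φ hcp a]
  refine ⟨fun b => (key b).1, fun b => ?_⟩
  simpa [star_star] using (key (star b)).2


lemma aux_pos (hcp : IsCompletelyPositive φ) (c : A) :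
    ∃ m : B, φ (star c * c) = star m * m := by
  obtain ⟨N, hN⟩ := hcp 1 (Matrix.of fun _ _ => star c * c)
    ⟨Matrix.of fun _ _ => c, by
      ext i j
      fin_cases i; fin_cases j
      simp [Matrix.mul_apply, Matrix.star_apply]⟩
  refine ⟨N 0 0, ?_⟩
  have := congrFun (congrFun hN 0) 0
  simpa [Matrix.mul_apply, Matrix.map_apply, Matrix.star_apply] using this

lemma aux_norm (hu : φ 1 = 1) (hcp : IsCompletelyPositive φ) (x : A) : ‖φ x‖ ≤ ‖x‖ := by
  letI := CStarAlgebra.spectralOrder A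
  haveI := CStarAlgebra.spectralOrderedRing A
  letI := CStarAlgebra.spectralOrder B
  haveI := CStarAlgebra.spectralOrderedRing B
  obtain ⟨R, hR⟩ := aux_defect φ hu hcp ![x]
  have hs : star (φ x) * φ x ≤ φ (star x * x) := by
    have h := hR 0 0
    simp only [Matrix.cons_val_zero] at h
    rw [h]
    exact le_add_of_nonneg_right (Finset.sum_nonneg fun k _ => star_mul_self_nonneg _)
  have h1 : star x * x ≤ algebraMap ℝ A (‖x‖^2) :=
    CStarAlgebra.star_mul_le_algebraMap_norm_sq
  set y := algebraMap ℝ A (‖x‖^2) - star x * x with hy_def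
  have hy : 0 ≤ y := sub_nonneg.mpr h1
  have hsq : star (CFC.sqrt y) * CFC.sqrt y = y := by
    rw [(IsSelfAdjoint.of_nonneg (CFC.sqrt_nonneg (a := y))).star_eq]
    exact CFC.sqrt_mul_sqrt_self y hy
  obtain ⟨m, hm⟩ := aux_pos φ hcp (CFC.sqrt y)
  rw [hsq] at hm
  have hφy : (0 : B) ≤ φ y := hm ▸ star_mul_self_nonneg m
  have hφ1 : φ (algebraMap ℝ A (‖x‖^2)) = algebraMap ℝ B (‖x‖^2) := by
    rw [Algebra.algebraMap_eq_smul_one, Algebra.algebraMap_eq_smul_one,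
      φ.map_smul_of_tower, hu]
  have h2 : φ (star x * x) ≤ algebraMap ℝ B (‖x‖^2) := by
    have : (0:B) ≤ algebraMap ℝ B (‖x‖^2) - φ (star x * x) := by
      rw [← hφ1, ← map_sub]
      exact hφy
    exact sub_nonneg.mp this
  have h3 : star (φ x) * φ x ≤ algebraMap ℝ B (‖x‖^2) := hs.trans h2
  have h4 : ‖star (φ x) * φ x‖ ≤ ‖algebraMap ℝ B (‖x‖^2)‖ :=
    CStarAlgebra.norm_le_norm_of_nonneg_of_le (star_mul_self_nonneg _) h3
  have h5 : ‖algebraMap ℝ B (‖x‖^2)‖ ≤ ‖x‖^2 := by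
    rw [Algebra.algebraMap_eq_smul_one, norm_smul]
    have hone : ‖(1:B)‖ ≤ 1 := by
      have := CStarRing.norm_star_mul_self (x := (1:B))
      simp only [star_one, one_mul] at this
      nlinarith [norm_nonneg (1:B)]
    calc ‖(‖x‖^2 : ℝ)‖ * ‖(1:B)‖ ≤ ‖(‖x‖^2 : ℝ)‖ * 1 := by
          exact mul_le_mul_of_nonneg_left hone (norm_nonneg _)
      _ = ‖x‖^2 := by simp [abs_of_nonneg (sq_nonneg ‖x‖)]
  have h6 : ‖φ x‖ * ‖φ x‖ ≤ ‖x‖^2 := by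
    rw [← CStarRing.norm_star_mul_self]
    exact h4.trans h5
  nlinarith [norm_nonneg (φ x), norm_nonneg x]


lemma mem_props (hu : φ 1 = 1) (hcp : IsCompletelyPositive φ) {a : A}
    (h1 : φ (star a) * φ a = φ (star a * a)) (h2 : φ a * φ (star a) = φ (a * star a)) :
    (∀ c, φ (c * a) = φ c * φ a) ∧ (∀ c, φ (a * c) = φ a * φ c) ∧
    (∀ c, φ (star a * c) = φ (star a) * φ c) ∧ (∀ c, φ (c * star a) = φ c * φ (star a)) := by
  obtain ⟨l1, l2⟩ := aux_mul φ hu hcp h1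
  have h2' : φ (star (star a)) * φ (star a) = φ (star (star a) * star a) := by
    simpa [star_star] using h2
  obtain ⟨r1, r2⟩ := aux_mul φ hu hcp h2'
  exact ⟨l1, fun c => by simpa [star_star] using r2 c, l2, r1⟩

end Aux

/-- The multiplicative domain
`M_φ = {a : φ(a*)φ(a) = φ(a*a) and φ(a)φ(a*) = φ(aa*)}` of a unital completely positive
map `φ : A → B` is a C*-subalgebra of `A` (a norm-closed self-adjoint unital subalgebra,
in particular a ℂ-subspace), and the restriction of `φ` to it is a ⋆-homomorphism. -/


theorem multiplicative_domain_cstar_subalgebra {A B : Type*}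
    [CStarAlgebra A] [CStarAlgebra B]
    (φ : A →ₗ[ℂ] B) (hu : φ 1 = 1) (hcp : IsCompletelyPositive φ) :
    let M : Set A := {a | φ (star a) * φ a = φ (star a * a) ∧
      φ a * φ (star a) = φ (a * star a)}
    (1 : A) ∈ M ∧
    (∀ a ∈ M, ∀ b ∈ M, a + b ∈ M) ∧
    (∀ (c : ℂ), ∀ a ∈ M, c • a ∈ M) ∧
    (∀ a ∈ M, ∀ b ∈ M, a * b ∈ M) ∧
    (∀ a ∈ M, star a ∈ M) ∧
    IsClosed M ∧
    (∀ a ∈ M, ∀ b ∈ M, φ (a * b) = φ a * φ b) ∧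
    (∀ a ∈ M, φ (star a) = star (φ a)) := by
  intro M
  have memM : ∀ a : A, a ∈ M ↔ (φ (star a) * φ a = φ (star a * a) ∧
      φ a * φ (star a) = φ (a * star a)) := fun a => Iff.rfl
  refine ⟨?_, ?_, ?_, ?_, ?_, ?_, ?_, ?_⟩
  · exact ⟨by simp [hu], by simp [hu]⟩
  · -- addition
    intro a ha b hb
    rw [memM] at ha hb ⊢
    obtain ⟨Pa1, Pa2, Pa3, Pa4⟩ := mem_props φ hu hcp ha.1 ha.2
    constructor
    · rw [show star (a+b) * (a+b)
          = star a * a + star a * b + (star b * a + star b * b) by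
        rw [star_add]; noncomm_ring]
      simp only [star_add, map_add, add_mul, mul_add]
      rw [← ha.1, ← hb.1, ← Pa3 b, ← Pa1 (star b)]
      abel
    · rw [show (a+b) * star (a+b)
          = a * star a + a * star b + (b * star a + b * star b) by
        rw [star_add]; noncomm_ring]
      simp only [star_add, map_add, add_mul, mul_add]
      rw [← ha.2, ← hb.2, ← Pa2 (star b), ← Pa4 b]
      abel
  · -- scalar multiplication
    intro c a ha
    rw [memM] at ha ⊢
    constructor
    · rw [star_smul, map_smul, map_smul, smul_mul_smul_comm, smul_mul_smul_comm,
        map_smul, ha.1]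
    · rw [star_smul, map_smul, map_smul, smul_mul_smul_comm, smul_mul_smul_comm,
        map_smul, ha.2]
  · -- multiplication
    intro a ha b hb
    rw [memM] at ha hb ⊢
    obtain ⟨Pa1, Pa2, Pa3, Pa4⟩ := mem_props φ hu hcp ha.1 ha.2
    obtain ⟨Pb1, Pb2, Pb3, Pb4⟩ := mem_props φ hu hcp hb.1 hb.2
    have L1 : φ (star (a*b)) * φ (a*b) = φ (star b) * φ (star a) * (φ a * φ b) := by
      rw [star_mul, Pb3, Pa2]
    have R1 : φ (star (a*b) * (a*b)) = φ (star b) * (φ (star a) * φ a * φ b) := by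
      rw [show star (a*b) * (a*b) = star b * ((star a * a) * b) by
        rw [star_mul]; noncomm_ring, Pb3, Pb1, ← ha.1]
    have L2 : φ (a*b) * φ (star (a*b)) = φ a * φ b * (φ (star b) * φ (star a)) := by
      rw [star_mul, Pb3, Pa2]
    have R2 : φ ((a*b) * star (a*b)) = φ a * (φ b * φ (star b) * φ (star a)) := by
      rw [show (a*b) * star (a*b) = a * ((b * star b) * star a) by
        rw [star_mul]; noncomm_ring, Pa2, Pa4, ← hb.2]
    constructor
    · rw [L1, R1]; noncomm_ring
    · rw [L2, R2]; noncomm_ring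
  · -- star
    intro a ha
    rw [memM] at ha ⊢
    exact ⟨by simpa [star_star] using ha.2, by simpa [star_star] using ha.1⟩
  · -- closed
    have hc : Continuous φ := AddMonoidHomClass.continuous_of_bound φ 1 fun x => by
      simpa using aux_norm φ hu hcp x
    have : M = {a : A | φ (star a) * φ a = φ (star a * a)} ∩
        {a : A | φ a * φ (star a) = φ (a * star a)} := rfl
    rw [this]
    refine IsClosed.inter ?_ ?_
    · exact isClosed_eq ((hc.comp continuous_star).mul hc)
        (hc.comp (continuous_star.mul continuous_id))
    · exact isClosed_eq (hc.mul (hc.comp continuous_star))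
        (hc.comp (continuous_id.mul continuous_star))
  · -- multiplicativity
    intro a ha b hb
    rw [memM] at ha
    exact ((mem_props φ hu hcp ha.1 ha.2).2.1 b).symm ▸ rfl
  · -- star preservation
    intro a _
    exact aux_star φ hcp a
end

section
/- Let $A$, $B$ be unital C*-algebras and $\phi : A \to B$ a unital completely positive map that maps every unitary of $A$ to a unitary of $B$. Then $\phi$ is a $*$-homomorphism. -/
section Helpers

variable {A B : Type*} [CStarAlgebra A] [CStarAlgebra B]

/-- A completely positive map sends `star c * c` to an element of that same form. -/
lemma map_star_mul_self' (φ : A →ₗ[ℂ] B) (hcp : IsCompletelyPositive φ) (c : A) :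
    ∃ s : B, φ (star c * c) = star s * s := by
  obtain ⟨N, hN⟩ := hcp 1 (Matrix.of fun _ _ => star c * c)
    ⟨Matrix.of fun _ _ => c, by
      ext i j
      fin_cases i <;> fin_cases j <;>
        simp [Matrix.mul_apply, Matrix.star_apply]⟩
  refine ⟨N 0 0, ?_⟩
  have := congrFun (congrFun hN 0) 0
  simpa [Matrix.map_apply, Matrix.mul_apply, Matrix.star_apply] using this

/-- Every selfadjoint element is a difference of two squares of selfadjoint elements. -/
lemma sa_decomp' {a : A} (ha : IsSelfAdjoint a) :
    ∃ c d : A, IsSelfAdjoint c ∧ IsSelfAdjoint d ∧ a = c * c - d * d := by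
  refine ⟨cfc (fun t : ℝ => Real.sqrt (max t 0)) a,
    cfc (fun t : ℝ => Real.sqrt (max (-t) 0)) a,
    cfc_predicate _ a, cfc_predicate _ a, ?_⟩
  rw [← cfc_mul _ _ a, ← cfc_mul _ _ a, ← cfc_sub _ _ a]
  conv_lhs => rw [← cfc_id ℝ a]
  apply cfc_congr
  intro t _
  simp only [id_eq]
  rw [Real.mul_self_sqrt (le_max_right _ _), Real.mul_self_sqrt (le_max_right _ _)]
  rcases le_total t 0 with h | h
  · rw [max_eq_right h, max_eq_left (by linarith)]; ring
  · rw [max_eq_left h, max_eq_right (by linarith)]; ring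

/-- A completely positive map sends selfadjoint elements to selfadjoint elements. -/
lemma map_isSelfAdjoint' (φ : A →ₗ[ℂ] B) (hcp : IsCompletelyPositive φ)
    {a : A} (ha : IsSelfAdjoint a) : IsSelfAdjoint (φ a) := by
  obtain ⟨c, d, hc, hd, rfl⟩ := sa_decomp' ha
  obtain ⟨s, hs⟩ := map_star_mul_self' φ hcp c
  obtain ⟨t, ht⟩ := map_star_mul_self' φ hcp d
  have h1 : φ (c * c - d * d) = star s * s - star t * t := by
    rw [map_sub]
    nth_rw 1 [← hc.star_eq]
    nth_rw 1 [← hd.star_eq]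
    rw [hs, ht]
  rw [h1, IsSelfAdjoint]
  simp [star_sub, star_mul, mul_assoc]

/-- The decomposition of an element into real and imaginary (selfadjoint) parts. -/
lemma re_im_decomp (x : A) :
    ∃ h k : A, IsSelfAdjoint h ∧ IsSelfAdjoint k ∧
      x = h + Complex.I • k ∧ star x = h - Complex.I • k := by
  have c1 : star ((1:ℂ)/2) = (1:ℂ)/2 := by simp [Complex.ext_iff]
  have c2 : star (-(Complex.I)/2) = Complex.I/2 := by simp [Complex.ext_iff]
  refine ⟨(1/2 : ℂ) • (x + star x), (-(Complex.I)/2) • (x - star x), ?_, ?_, ?_, ?_⟩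
  · rw [IsSelfAdjoint, star_smul, star_add, star_star, c1, add_comm]
  · rw [IsSelfAdjoint, star_smul, star_sub, star_star, c2,
      show (star x - x) = (-1 : ℂ) • (x - star x) by simp,
      smul_smul, show Complex.I/2 * (-1) = -(Complex.I)/2 by ring]
  · rw [smul_smul, show Complex.I * (-(Complex.I)/2) = 1/2 by
      simp [Complex.ext_iff]; norm_num]
    module
  · rw [smul_smul, show Complex.I * (-(Complex.I)/2) = 1/2 by
      simp [Complex.ext_iff]; norm_num]
    module

/-- A completely positive map is star-preserving. -/
lemma map_star' (φ : A →ₗ[ℂ] B) (hcp : IsCompletelyPositive φ) (x : A) :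
    φ (star x) = star (φ x) := by
  obtain ⟨h, k, hhsa, hksa, hx, hsx⟩ := re_im_decomp x
  rw [hsx]
  nth_rw 1 [hx]
  rw [map_sub, map_add, map_smul, star_add, star_smul,
    (map_isSelfAdjoint' φ hcp hhsa).star_eq, (map_isSelfAdjoint' φ hcp hksa).star_eq]
  simp [sub_eq_add_neg]

/-- Every selfadjoint contraction is the real part of a unitary. -/
lemma sa_unitary_decomp {a : A} (ha : IsSelfAdjoint a) (hn : ‖a‖ ≤ 1) :
    ∃ u : A, u ∈ unitary A ∧ a = (1/2 : ℂ) • (u + star u) := by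
  rcases subsingleton_or_nontrivial A with hA | hA
  · exact ⟨1, one_mem _, Subsingleton.elim _ _⟩
  set b := cfc (fun t : ℝ => Real.sqrt (1 - t^2)) a with hbdef
  have hbsa : IsSelfAdjoint b := cfc_predicate _ a
  have hb2 : b * b = 1 - a * a := by
    rw [hbdef, ← cfc_mul _ _ a]
    have h1 : a * a = cfc (fun t : ℝ => t * t) a := by
      conv_lhs => rw [← cfc_id' ℝ a]
      rw [← cfc_mul _ _ a]
    rw [h1, ← cfc_one (R := ℝ) a, ← cfc_sub _ _ a]
    apply cfc_congr
    intro t ht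
    have ht1 : |t| ≤ 1 := le_trans (by simpa using spectrum.norm_le_norm_of_mem ht) hn
    have h2 : (0:ℝ) ≤ 1 - t^2 := by nlinarith [abs_nonneg t, sq_abs t]
    simp only [Pi.one_apply]
    rw [Real.mul_self_sqrt h2]
    ring
  have hab : a * b = b * a := by
    have h1 : cfc (fun t : ℝ => t * Real.sqrt (1 - t^2)) a = a * b := by
      rw [cfc_mul _ _ a, cfc_id' ℝ a]
    have h2 : cfc (fun t : ℝ => Real.sqrt (1 - t^2) * t) a = b * a := by
      rw [cfc_mul _ _ a, cfc_id' ℝ a]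
    rw [← h1, ← h2]
    exact cfc_congr fun t _ => mul_comm _ _
  refine ⟨a + Complex.I • b, ?_, ?_⟩
  · have hstar : star (a + Complex.I • b) = a - Complex.I • b := by
      rw [star_add, ha.star_eq, star_smul, hbsa.star_eq, Complex.star_def, Complex.conj_I]
      simp [sub_eq_add_neg]
    rw [Unitary.mem_iff, hstar]
    constructor
    · rw [sub_mul, mul_add, mul_add, mul_smul_comm, smul_mul_assoc, smul_mul_assoc,
        mul_smul_comm, smul_smul, Complex.I_mul_I, hab, hb2]
      module
    · rw [add_mul, mul_sub, mul_sub, mul_smul_comm, smul_mul_assoc, smul_mul_assoc,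
        mul_smul_comm, smul_smul, Complex.I_mul_I, hab, hb2]
      module
  · rw [star_add, ha.star_eq, star_smul, hbsa.star_eq, Complex.star_def, Complex.conj_I]
    module

/-- Multiplicative domain lemma: if the Schwarz inequality for `a` is an equality, then
`φ (star a * x) = star (φ a) * φ x` for all `x`. -/
lemma mult_domain (φ : A →ₗ[ℂ] B) (hu : φ 1 = 1) (hcp : IsCompletelyPositive φ)
    (hstar : ∀ x : A, φ (star x) = star (φ x))
    {a : A} (ha : star (φ a) * φ a = φ (star a * a)) (x : A) :
    φ (star a * x) = star (φ a) * φ x := by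
  letI := CStarAlgebra.spectralOrder B
  letI := CStarAlgebra.spectralOrderedRing B
  set v : Fin 3 → A := ![1, a, x] with hv
  have hv0 : v 0 = 1 := rfl
  have hv1 : v 1 = a := rfl
  have hv2 : v 2 = x := rfl
  have hpos : (Matrix.of fun i j => star (v i) * v j).IsPosSemidef := by
    refine ⟨Matrix.of fun k i => if k = 0 then v i else 0, ?_⟩
    ext i j
    simp [Matrix.mul_apply, Matrix.star_apply, Fin.sum_univ_three]
  obtain ⟨P, hP⟩ := hcp 3 _ hpos
  have hent : ∀ i j : Fin 3, φ (star (v i) * v j) = ∑ k, star (P k i) * P k j := by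
    intro i j
    have := congrFun (congrFun hP i) j
    simpa [Matrix.map_apply, Matrix.mul_apply, Matrix.star_apply] using this
  have e00 : ∑ k, star (P k 0) * P k 0 = 1 := by
    rw [← hent 0 0, hv0]; simpa using hu
  have e01 : ∑ k, star (P k 0) * P k 1 = φ a := by
    rw [← hent 0 1, hv0, hv1]; simp
  have e10 : ∑ k, star (P k 1) * P k 0 = star (φ a) := by
    rw [← hent 1 0, hv0, hv1]; simpa using hstar a
  have e11 : ∑ k, star (P k 1) * P k 1 = star (φ a) * φ a := by
    rw [← hent 1 1, hv1, ha]
  have e02 : ∑ k, star (P k 0) * P k 2 = φ x := by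
    rw [← hent 0 2, hv0, hv2]; simp
  have key : ∀ k : Fin 3, P k 1 = P k 0 * φ a := by
    have expand : ∀ k : Fin 3, star (P k 1 - P k 0 * φ a) * (P k 1 - P k 0 * φ a)
        = (star (P k 1) * P k 1 - (star (P k 1) * P k 0) * φ a)
          - (star (φ a) * (star (P k 0) * P k 1)
            - star (φ a) * (star (P k 0) * P k 0) * φ a) := by
      intro k
      simp only [star_sub, star_mul]
      noncomm_ring
    have hsum : ∑ k : Fin 3, star (P k 1 - P k 0 * φ a) * (P k 1 - P k 0 * φ a) = 0 := by
      rw [Finset.sum_congr rfl fun k _ => expand k, Finset.sum_sub_distrib,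
        Finset.sum_sub_distrib, Finset.sum_sub_distrib, ← Finset.sum_mul,
        ← Finset.mul_sum, e11, e10, e01]
      have : ∑ k : Fin 3, star (φ a) * (star (P k 0) * P k 0) * φ a
          = star (φ a) * (∑ k : Fin 3, star (P k 0) * P k 0) * φ a := by
        rw [Finset.mul_sum, Finset.sum_mul]
      rw [this, e00]
      simp
    intro k
    have hnn : ∀ j ∈ Finset.univ, (0:B) ≤ star (P j 1 - P j 0 * φ a) * (P j 1 - P j 0 * φ a) :=
      fun j _ => star_mul_self_nonneg _
    have hk0 := (Finset.sum_eq_zero_iff_of_nonneg hnn).mp hsum k (Finset.mem_univ k)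
    have := (CStarRing.star_mul_self_eq_zero_iff _).mp hk0
    exact sub_eq_zero.mp this
  calc φ (star a * x) = ∑ k, star (P k 1) * P k 2 := by rw [← hent 1 2, hv1, hv2]
    _ = ∑ k, star (φ a) * (star (P k 0) * P k 2) := by
        refine Finset.sum_congr rfl fun k _ => ?_
        rw [key k, star_mul, mul_assoc]
    _ = star (φ a) * φ x := by rw [← Finset.mul_sum, e02]

end Helpers

/-- A unital completely positive map between unital C*-algebras that maps unitaries to
unitaries is a ⋆-homomorphism. -/
theorem ucp_unitaries_to_unitaries_star_hom {A B : Type*}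
    [CStarAlgebra A] [CStarAlgebra B]
    (φ : A →ₗ[ℂ] B) (hu : φ 1 = 1) (hcp : IsCompletelyPositive φ)
    (hun : ∀ u : A, u ∈ unitary A → φ u ∈ unitary B) :
    (∀ x y : A, φ (x * y) = φ x * φ y) ∧ (∀ x : A, φ (star x) = star (φ x)) := by
  have hstar : ∀ x : A, φ (star x) = star (φ x) := map_star' φ hcp
  have hQu : ∀ u ∈ unitary A, ∀ x, φ (u * x) = φ u * φ x := by
    intro u hu' x
    have huA := Unitary.mem_iff.mp hu'
    have huB := Unitary.mem_iff.mp (hun u hu')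
    have h1 : star (φ (star u)) * φ (star u) = φ (star (star u) * star u) := by
      rw [hstar u, star_star, star_star, huB.2, huA.2, hu]
    have h2 := mult_domain φ hu hcp hstar h1 x
    rw [star_star] at h2
    rw [h2, hstar u, star_star]
  have hQsmul : ∀ (c : ℂ) (y : A), (∀ x, φ (y * x) = φ y * φ x) →
      ∀ x, φ ((c • y) * x) = φ (c • y) * φ x := by
    intro c y hy x
    rw [smul_mul_assoc, map_smul, map_smul, hy, smul_mul_assoc]
  have hQadd : ∀ y z : A, (∀ x, φ (y * x) = φ y * φ x) → (∀ x, φ (z * x) = φ z * φ x) →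
      ∀ x, φ ((y + z) * x) = φ (y + z) * φ x := by
    intro y z hy hz x
    rw [add_mul, map_add, map_add, hy, hz, add_mul]
  have hQsa : ∀ y : A, IsSelfAdjoint y → ∀ x, φ (y * x) = φ y * φ x := by
    intro y hy x
    by_cases h0 : y = 0
    · simp [h0]
    · have hny : (0:ℝ) < ‖y‖ := norm_pos_iff.mpr h0
      set c : ℂ := ((‖y‖⁻¹ : ℝ) : ℂ) with hc
      have hsa' : IsSelfAdjoint (c • y) := by
        rw [IsSelfAdjoint, star_smul, hy.star_eq, hc, Complex.star_def, Complex.conj_ofReal]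
      have hn' : ‖c • y‖ ≤ 1 := by
        rw [norm_smul]
        have h3 : ‖c‖ = ‖y‖⁻¹ := by
          rw [hc, Complex.norm_real, Real.norm_eq_abs, abs_of_nonneg (inv_nonneg.mpr hny.le)]
        rw [h3, inv_mul_cancel₀ hny.ne']
      obtain ⟨u, huu, hdec⟩ := sa_unitary_decomp hsa' hn'
      have hyeq : y = (‖y‖ : ℂ) • (c • y) := by
        rw [smul_smul, hc]
        norm_cast
        rw [mul_inv_cancel₀ hny.ne']
        simp
      have hQcy : ∀ x', φ ((c • y) * x') = φ (c • y) * φ x' := by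
        intro x'
        rw [hdec]
        exact hQsmul _ _ (hQadd _ _ (hQu u huu) (hQu (star u) (Unitary.star_mem huu))) x'
      calc φ (y * x) = φ (((‖y‖ : ℂ) • (c • y)) * x) := by rw [← hyeq]
        _ = φ ((‖y‖ : ℂ) • (c • y)) * φ x := hQsmul _ _ hQcy x
        _ = φ y * φ x := by rw [← hyeq]
  refine ⟨fun y x => ?_, hstar⟩
  obtain ⟨h, k, hh, hk, hyd, -⟩ := re_im_decomp y
  calc φ (y * x) = φ ((h + Complex.I • k) * x) := by rw [← hyd]
    _ = φ (h + Complex.I • k) * φ x :=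
        hQadd _ _ (hQsa h hh) (hQsmul _ _ (hQsa k hk)) x
    _ = φ y * φ x := by rw [← hyd]
end

section
/- Let $A$, $B$ be unital C*-algebras and $\phi : A \to B$ a unital completely positive linear map that is also an isometric bijection. Then for every unitary $v \in B$, the element $u = \phi^{-1}(v)$ is a unitary of $A$. -/
open scoped ComplexStarModule

section Aux

variable {A B : Type*} [CStarAlgebra A] [CStarAlgebra B]

/-- Quadratic forms of positive matrices are nonnegative. -/
lemma aux_quad_nonneg [PartialOrder B] [StarOrderedRing B] {n : ℕ}
    {P : Matrix (Fin n) (Fin n) B} (hP : P.IsPosSemidef) (w : Fin n → B) :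
    0 ≤ ∑ i, ∑ j, star (w i) * P i j * w j := by
  obtain ⟨N, rfl⟩ := hP
  have key : ∑ i, ∑ j, star (w i) * (star N * N) i j * w j
      = ∑ k, star (∑ i, N k i * w i) * (∑ j, N k j * w j) := by
    calc ∑ i, ∑ j, star (w i) * (star N * N) i j * w j
        = ∑ i, ∑ j, ∑ k, star (w i) * (star (N k i) * N k j) * w j := by
          simp only [Matrix.mul_apply, Matrix.star_apply, Matrix.conjTranspose_apply,
            Finset.mul_sum, Finset.sum_mul]
      _ = ∑ i, ∑ k, ∑ j, star (w i) * (star (N k i) * N k j) * w j :=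
          Finset.sum_congr rfl fun i _ => Finset.sum_comm
      _ = ∑ k, ∑ i, ∑ j, star (w i) * (star (N k i) * N k j) * w j :=
          Finset.sum_comm
      _ = ∑ k, star (∑ i, N k i * w i) * (∑ j, N k j * w j) := by
          simp only [star_sum, Finset.sum_mul, Finset.mul_sum, star_mul, mul_assoc]
          exact Finset.sum_congr rfl fun k _ => Finset.sum_comm
  rw [key]
  exact Finset.sum_nonneg fun k _ => star_mul_self_nonneg _

variable [PartialOrder A] [StarOrderedRing A] [PartialOrder B] [StarOrderedRing B]

/-- A completely positive map is positive. -/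
lemma aux_pos_map {φ : A →ₗ[ℂ] B} (hcp : IsCompletelyPositive φ) {a : A}
    (ha : 0 ≤ a) : 0 ≤ φ a := by
  set M : Matrix (Fin 1) (Fin 1) A := Matrix.of fun _ _ => a with hMdef
  have h1 : M.IsPosSemidef := by
    refine ⟨Matrix.of fun _ _ => CFC.sqrt a, ?_⟩
    ext i j
    have h2 := CFC.sqrt_mul_sqrt_self a ha
    have h3 : star (CFC.sqrt a) = CFC.sqrt a :=
      (CFC.sqrt_nonneg (a := a)).isSelfAdjoint.star_eq
    simp [hMdef, Matrix.mul_apply, Matrix.conjTranspose_apply, h3, h2]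
  obtain ⟨N, hN⟩ := hcp 1 M h1
  have key : φ a = star (N 0 0) * N 0 0 := by
    have h4 := congrFun (congrFun hN 0) 0
    simpa [hMdef, Matrix.mul_apply, Matrix.conjTranspose_apply, Fin.sum_univ_one] using h4
  rw [key]
  exact star_mul_self_nonneg _

/-- A positive map is star-preserving. -/
lemma aux_star_map {φ : A →ₗ[ℂ] B} (hcp : IsCompletelyPositive φ) (a : A) :
    φ (star a) = star (φ a) := by
  have hsa : ∀ h : A, IsSelfAdjoint h → IsSelfAdjoint (φ h) := by
    intro h hh
    rw [← CFC.posPart_sub_negPart h hh, map_sub]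
    exact ((aux_pos_map hcp (CFC.posPart_nonneg h)).isSelfAdjoint).sub
      ((aux_pos_map hcp (CFC.negPart_nonneg h)).isSelfAdjoint)
  have hre := hsa (ℜ a) (ℜ a).2
  have him := hsa (ℑ a) (ℑ a).2
  have hdecomp : (ℜ a : A) + Complex.I • (ℑ a : A) = a :=
    realPart_add_I_smul_imaginaryPart a
  have hstar : star a = (ℜ a : A) - Complex.I • (ℑ a : A) := by
    conv_lhs => rw [← hdecomp]
    rw [star_add, star_smul, (ℜ a).2.star_eq, (ℑ a).2.star_eq]
    simp [sub_eq_add_neg, Complex.conj_I]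
  rw [hstar, map_sub, map_smul]
  conv_rhs => rw [← hdecomp]
  rw [map_add, map_smul, star_add, star_smul, hre.star_eq, him.star_eq]
  simp [sub_eq_add_neg, Complex.conj_I]

/-- Kadison–Schwarz inequality for u.c.p. maps. -/
lemma aux_schwarz {φ : A →ₗ[ℂ] B} (hu : φ 1 = 1) (hcp : IsCompletelyPositive φ)
    (a : A) : star (φ a) * φ a ≤ φ (star a * a) := by
  set M : Matrix (Fin 2) (Fin 2) A := !![1, a; star a, star a * a] with hM
  have hMpos : M.IsPosSemidef := by
    refine ⟨!![1, a; 0, 0], ?_⟩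
    ext i j
    fin_cases i <;> fin_cases j <;>
      simp [hM, Matrix.mul_apply, Fin.sum_univ_two, Matrix.conjTranspose_apply]
  have hP := hcp 2 M hMpos
  have hq := aux_quad_nonneg hP ![-(φ a), 1]
  have hsum : ∑ i, ∑ j, star ((![-(φ a), 1]) i) * (M.map φ) i j * (![-(φ a), 1]) j
      = φ (star a * a) - star (φ a) * φ a := by
    simp [Fin.sum_univ_two, hM, Matrix.map_apply, hu, aux_star_map hcp,
      mul_comm, sub_eq_add_neg]
    abel
  rw [hsum] at hq
  exact sub_nonneg.mp hq

end Aux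

/-- If `φ : A → B` is a unital completely positive isometric linear bijection between
unital C*-algebras, then the preimage of any unitary of `B` is a unitary of `A`. -/
theorem ucp_isometric_bijection_preimage_unitary {A B : Type*}
    [CStarAlgebra A] [CStarAlgebra B]
    (φ : A →ₗ[ℂ] B) (hu : φ 1 = 1) (hcp : IsCompletelyPositive φ)
    (hiso : Isometry φ) (hbij : Function.Bijective φ)
    (v : B) (hv : v ∈ unitary B) (u : A) (huv : φ u = v) :
    u ∈ unitary A := by
  letI : PartialOrder A := CStarAlgebra.spectralOrder A
  haveI : StarOrderedRing A := CStarAlgebra.spectralOrderedRing A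
  letI : PartialOrder B := CStarAlgebra.spectralOrder B
  haveI : StarOrderedRing B := CStarAlgebra.spectralOrderedRing B
  rcases subsingleton_or_nontrivial B with hB | hB
  · have : Subsingleton A := ⟨fun x y => hbij.injective (Subsingleton.elim _ _)⟩
    constructor <;> exact Subsingleton.elim _ _
  -- norms
  have hnv : ‖v‖ = 1 := CStarRing.norm_coe_unitary ⟨v, hv⟩
  have hnu : ‖u‖ = 1 := by
    have := hiso.norm_map_of_map_zero (map_zero φ) u
    rw [huv] at this; rw [← this, hnv]
  -- general step
  have main : ∀ w : A, ‖w‖ = 1 → star (φ w) * φ w = 1 → star w * w = 1 := by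
    intro w hnw hvv
    have hle : star w * w ≤ 1 := by
      have h1 : star w * w ≤ algebraMap ℝ A ‖star w * w‖ :=
        IsSelfAdjoint.le_algebraMap_norm_self (IsSelfAdjoint.star_mul_self w)
      rwa [CStarRing.norm_star_mul_self, hnw, one_mul, map_one] at h1
    have hge : (1 : B) ≤ φ (star w * w) := by
      have := aux_schwarz hu hcp w
      rwa [hvv] at this
    have hle' : φ (star w * w) ≤ 1 := by
      have h0 : (0 : A) ≤ 1 - star w * w := sub_nonneg.mpr hle
      have := aux_pos_map hcp h0
      rw [map_sub, hu] at this
      exact sub_nonneg.mp this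
    have heq : φ (star w * w) = φ 1 := by rw [hu]; exact le_antisymm hle' hge
    exact hbij.injective heq
  constructor
  · exact main u hnu (by rw [huv]; exact hv.1)
  · have h1 : star (φ (star u)) * φ (star u) = 1 := by
      rw [aux_star_map hcp, huv, star_star]
      exact hv.2
    have h2 := main (star u) (by rw [norm_star, hnu]) h1
    rwa [star_star] at h2
end

section
/- Let $A$ be a unital C*-algebra and $u, v \in A$ unitaries, $x \in A$. Then the matrix $\begin{pmatrix} 1 & u & x \\ u^* & 1 & v \\ x^* & v^* & 1 \end{pmatrix} \in M_3(A)$ is positive if and only if $x = uv$. -/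
private lemma aux_sum_star_mul_self_eq_zero {A : Type*} [CStarAlgebra A] {n : ℕ}
    (w : Fin n → A) (h : ∑ k, star (w k) * w k = 0) : ∀ k, w k = 0 := by
  letI := CStarAlgebra.spectralOrder A
  haveI := CStarAlgebra.spectralOrderedRing A
  intro k
  have hnn : ∀ k ∈ (Finset.univ : Finset (Fin n)), (0 : A) ≤ star (w k) * w k :=
    fun k _ => star_mul_self_nonneg (w k)
  have := (Finset.sum_eq_zero_iff_of_nonneg hnn).mp h k (Finset.mem_univ k)
  exact CStarRing.star_mul_self_eq_zero_iff (w k) |>.mp this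

/-- Walter's characterization: for unitaries `u, v` and an element `x` of a unital
C*-algebra `A`, the matrix `!![1, u, x; u*, 1, v; x*, v*, 1] ∈ M₃(A)` is positive
(i.e. of the form `N* N`) if and only if `x = u * v`. -/
theorem walter_positivity_iff {A : Type*} [CStarAlgebra A]
    (u v x : A) (hu : u ∈ unitary A) (hv : v ∈ unitary A) :
    (∃ N : Matrix (Fin 3) (Fin 3) A,
        !![1, u, x; star u, 1, v; star x, star v, 1] = star N * N) ↔ x = u * v := by
  obtain ⟨hu1, hu2⟩ := hu
  obtain ⟨hv1, hv2⟩ := hv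
  have hu1' : ∀ y : A, star u * (u * y) = y := fun y => by rw [← mul_assoc, hu1, one_mul]
  constructor
  · rintro ⟨N, hN⟩
    have key : ∀ i j, (!![1, u, x; star u, 1, v; star x, star v, 1] : Matrix (Fin 3) (Fin 3) A) i j
        = ∑ k, star (N k i) * N k j := by
      intro i j
      rw [hN]
      simp [Matrix.mul_apply, Matrix.star_apply]
    have h00 : (1 : A) = ∑ k, star (N k 0) * N k 0 := key 0 0
    have h01 : u = ∑ k, star (N k 0) * N k 1 := key 0 1
    have h10 : star u = ∑ k, star (N k 1) * N k 0 := key 1 0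
    have h11 : (1 : A) = ∑ k, star (N k 1) * N k 1 := key 1 1
    have h20 : star x = ∑ k, star (N k 2) * N k 0 := key 2 0
    have h21 : star v = ∑ k, star (N k 2) * N k 1 := key 2 1
    set w : Fin 3 → A := fun k => N k 0 - N k 1 * star u with hw
    have expand : ∀ k, star (w k) * w k
        = star (N k 0) * N k 0 - (star (N k 0) * N k 1) * star u
          - u * (star (N k 1) * N k 0) + u * ((star (N k 1) * N k 1) * star u) := by
      intro k
      simp only [hw, star_sub, star_mul, star_star]
      noncomm_ring
    have hsum : ∑ k, star (w k) * w k = 0 := by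
      calc ∑ k, star (w k) * w k
          = (∑ k, star (N k 0) * N k 0) - (∑ k, star (N k 0) * N k 1) * star u
            - u * (∑ k, star (N k 1) * N k 0)
            + u * ((∑ k, star (N k 1) * N k 1) * star u) := by
            simp only [expand, Finset.sum_add_distrib, Finset.sum_sub_distrib,
              Finset.sum_mul, Finset.mul_sum]
        _ = 0 := by
            rw [← h00, ← h01, ← h10, ← h11]
            simp [hu2]
    have hwz : ∀ k, w k = 0 := aux_sum_star_mul_self_eq_zero w hsum
    have hab : ∀ k, N k 0 = N k 1 * star u := by
      intro k
      have := hwz k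
      simp only [hw, sub_eq_zero] at this
      exact this
    have hx : star x = star v * star u := by
      rw [h20]
      calc ∑ k, star (N k 2) * N k 0 = ∑ k, (star (N k 2) * N k 1) * star u := by
            refine Finset.sum_congr rfl fun k _ => ?_
            rw [hab k, mul_assoc]
        _ = (∑ k, star (N k 2) * N k 1) * star u := by rw [Finset.sum_mul]
        _ = star v * star u := by rw [← h21]
    have := congrArg star hx
    simpa using this
  · rintro rfl
    refine ⟨!![1, u, u * v; 0, 0, 0; 0, 0, 0], ?_⟩
    have hstar : star (!![1, u, u * v; 0, 0, 0; 0, 0, 0] : Matrix (Fin 3) (Fin 3) A)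
        = !![1, 0, 0; star u, 0, 0; star v * star u, 0, 0] := by
      ext i j
      fin_cases i <;> fin_cases j <;>
        simp [Matrix.star_apply, star_mul, Matrix.vecHead, Matrix.vecTail]
    rw [hstar, Matrix.mul_fin_three]
    simp [star_mul, mul_assoc, hu1, hv1, hu1']
end
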